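/- Let n ≥ 2 and u ∈ ℂ. Let γ = (γ_1, γ_2) be a composition of n with γ_1, γ_2 > 0, and set w_γ = w_{γ_1} w_{γ_2} where w_{γ_1} = s_1 s_2 ⋯ s_{γ_1−1} and w_{γ_2} = s_{γ_1+1} ⋯ s_{n−1}. Let I_1 = {i_1,…,i_a} ⊆ {1,…,γ_1} and I_2 = {j_1,…,j_b} ⊆ {γ_1+1,…,n}, with a + b even. If a and b are both odd, then w_γ c_{I_1} c_{I_2} ∈ [ℌ_A, ℌ_A]. If a and b are both even, then there exists ε ∈ {1, −1} such that w_γ c_{I_1} c_{I_2} − ε w_γ ∈ [ℌ_A, ℌ_A]. -/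

import Mathlib

open scoped BigOperators

namespace DAHCA

/-- Generators of the degenerate affine Hecke-Clifford algebra of type `A_{n-1}`. -/
inductive Gen (n : ℕ) : Type
  | x : Fin n → Gen n
  | c : Fin n → Gen n
  | w : Equiv.Perm (Fin n) → Gen n

noncomputable def X (n : ℕ) (i : Fin n) : FreeAlgebra ℂ (Gen n) := FreeAlgebra.ι ℂ (Gen.x i)
noncomputable def C (n : ℕ) (i : Fin n) : FreeAlgebra ℂ (Gen n) := FreeAlgebra.ι ℂ (Gen.c i)
noncomputable def W (n : ℕ) (σ : Equiv.Perm (Fin n)) : FreeAlgebra ℂ (Gen n) :=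
  FreeAlgebra.ι ℂ (Gen.w σ)

/-- The simple transposition `s_{i+1} = (i, i+1)` (0-indexed). -/
def sA (n : ℕ) (i : ℕ) (h : i + 1 < n) : Equiv.Perm (Fin n) :=
  Equiv.swap ⟨i, Nat.lt_of_succ_lt h⟩ ⟨i + 1, h⟩

/-- The defining relations of the degenerate affine Hecke-Clifford algebra of type
`A_{n-1}` with parameter `u`. -/
inductive Rel (n : ℕ) (u : ℂ) : FreeAlgebra ℂ (Gen n) → FreeAlgebra ℂ (Gen n) → Prop
  | xx (i j : Fin n) : Rel n u (X n i * X n j) (X n j * X n i)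
  | csq (i : Fin n) : Rel n u (C n i * C n i) 1
  | cc (i j : Fin n) (hij : i ≠ j) : Rel n u (C n i * C n j) (-(C n j * C n i))
  | ww (σ τ : Equiv.Perm (Fin n)) : Rel n u (W n σ * W n τ) (W n (σ * τ))
  | wone : Rel n u (W n 1) 1
  | xc (i : Fin n) : Rel n u (X n i * C n i) (-(C n i * X n i))
  | xc' (i j : Fin n) (hij : i ≠ j) : Rel n u (X n i * C n j) (C n j * X n i)
  | wc (σ : Equiv.Perm (Fin n)) (i : Fin n) : Rel n u (W n σ * C n i) (C n (σ i) * W n σ)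
  | cross (i : ℕ) (h : i + 1 < n) :
      Rel n u (X n ⟨i + 1, h⟩ * W n (sA n i h) - W n (sA n i h) * X n ⟨i, Nat.lt_of_succ_lt h⟩)
        (u • (1 - C n ⟨i + 1, h⟩ * C n ⟨i, Nat.lt_of_succ_lt h⟩))
  | xw (i : ℕ) (h : i + 1 < n) (j : Fin n) (h1 : (j : ℕ) ≠ i) (h2 : (j : ℕ) ≠ i + 1) :
      Rel n u (X n j * W n (sA n i h)) (W n (sA n i h) * X n j)

/-- The degenerate affine Hecke-Clifford algebra of type `A_{n-1}` with parameter `u`. -/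
abbrev HA (n : ℕ) (u : ℂ) := RingQuot (Rel n u)

noncomputable def xH (n : ℕ) (u : ℂ) (i : Fin n) : HA n u :=
  RingQuot.mkAlgHom ℂ (Rel n u) (X n i)
noncomputable def cH (n : ℕ) (u : ℂ) (i : Fin n) : HA n u :=
  RingQuot.mkAlgHom ℂ (Rel n u) (C n i)
noncomputable def wH (n : ℕ) (u : ℂ) (σ : Equiv.Perm (Fin n)) : HA n u :=
  RingQuot.mkAlgHom ℂ (Rel n u) (W n σ)

/-- The linear span of all commutators in an algebra `A`; the cocenter is `A` modulo
this subspace. -/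
def commSpan (A : Type*) [Ring A] [Algebra ℂ A] : Submodule ℂ A :=
  Submodule.span ℂ {z : A | ∃ a b : A, z = a * b - b * a}

/-- The ordered product `c_{i_1} c_{i_2} ⋯ c_{i_m}` over `I = {i_1 < i_2 < ⋯ < i_m}`. -/
noncomputable def cProd (n : ℕ) (u : ℂ) (I : Finset (Fin n)) : HA n u :=
  ((I.sort (· ≤ ·)).map (cH n u)).prod

/-- The cycle `(a, a+1, …, b-1)` expressed as the product of the simple transpositions
`s_{a+1} s_{a+2} ⋯ s_{b-1}` (1-indexed), i.e. `(a,a+1)(a+1,a+2)⋯(b-2,b-1)` (0-indexed). -/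
def wSeg (n : ℕ) (a b : ℕ) : Equiv.Perm (Fin n) :=
  ((List.range (b - a - 1)).map fun j =>
    if h : a + j + 1 < n then sA n (a + j) h else 1).prod

end DAHCA

/-!
The two cycles `w_{γ_1}`, `w_{γ_2}` have disjoint supports; `w_{γ_2}` fixes the first block and
`w_{γ_1}` the second.

If `|I_1|` and `|I_2|` are odd, put `A = w_{γ_1} c_{I_1}` and `B = w_{γ_2} c_{I_2}`. Then
`A B = w_γ c_{I_1} c_{I_2}` while `B A = -A B`, because `c_{I_1}` and `c_{I_2}` anticommute, so
`2 w_γ c_{I_1} c_{I_2} = A B - B A`.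

If both are even, work modulo commutators. Conjugating by `c_k` (note `c_k² = 1`) and using
`c_k w = w c_{w⁻¹ k}` gives `w c_J ≡ ± w c_{J ∆ {k-1, k}}` whenever `w (k-1) = k`, that is, for
`k - 1` and `k` adjacent inside one block. Repeated toggles of adjacent pairs in a block
reduce any even subset of that block to the empty set.
-/

open scoped symmDiff

section SymmDiff

variable {α : Type*} [DecidableEq α]

theorem Finset.symmDiff_singleton_of_mem {s : Finset α} {a : α} (h : a ∈ s) :
    s ∆ {a} = s.erase a := by
  ext x
  by_cases hx : x = a <;> simp [Finset.mem_symmDiff, hx, h]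

theorem Finset.symmDiff_singleton_of_notMem {s : Finset α} {a : α} (h : a ∉ s) :
    s ∆ {a} = insert a s := by
  ext x
  by_cases hx : x = a <;> simp [Finset.mem_symmDiff, hx, h]

theorem Finset.even_card_symmDiff_singleton (s : Finset α) (a : α) :
    Even (s ∆ {a}).card ↔ ¬Even s.card := by
  by_cases h : a ∈ s
  · obtain ⟨m, hm⟩ := Nat.exists_eq_add_of_lt (Finset.card_pos.mpr ⟨a, h⟩)
    rw [Finset.symmDiff_singleton_of_mem h, Finset.card_erase_of_mem h, hm]
    simp [Nat.even_add_one]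
  · rw [Finset.symmDiff_singleton_of_notMem h, Finset.card_insert_of_notMem h, Nat.even_add_one]

theorem Finset.union_symmDiff_of_disjoint {s t r : Finset α} (h : Disjoint t r) :
    (s ∪ t) ∆ r = s ∆ r ∪ t := by
  ext x
  have : x ∈ t → x ∉ r := fun hx => Finset.disjoint_left.mp h hx
  simp only [Finset.mem_symmDiff, Finset.mem_union]
  tauto

end SymmDiff

theorem Finset.induction_on_even_card_of_adjacent {n L U : ℕ} {P : Finset (Fin n) → Prop}
    (empty : P ∅)
    (step : ∀ (J : Finset (Fin n)) (k' k : Fin n), k'.val + 1 = k.val → L < k.val → k.val < U →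
      P (J ∆ {k} ∆ {k'}) → P J)
    {J : Finset (Fin n)} (hJ : ∀ i ∈ J, L ≤ i.val ∧ i.val < U) (heven : Even J.card) : P J := by
  suffices ∀ V ≤ U, ∀ J : Finset (Fin n), (∀ i ∈ J, L ≤ i.val ∧ i.val < V) → Even J.card → P J from
    this U le_rfl J hJ heven
  intro V
  induction V with
  | zero =>
    intro _ J hJ _
    rwa [Finset.eq_empty_of_forall_notMem fun i hi => (Nat.not_lt_zero _ (hJ i hi).2)]
  | succ V ih =>
    intro hV J hJ heven
    by_cases hV' : ∃ k ∈ J, k.val = V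
    · obtain ⟨k, hkJ, rfl⟩ := hV'
      -- an even `J` cannot be the singleton `{k}`, so some element of `J` lies strictly below `k`
      have hLk : L < k.val := by
        by_contra! hkL
        have : J = {k} := Finset.eq_singleton_iff_unique_mem.mpr
          ⟨hkJ, fun i hi => Fin.ext (by have := hJ i hi; omega)⟩
        rw [this, Finset.card_singleton] at heven
        exact Nat.not_even_one heven
      refine step J ⟨k.val - 1, by omega⟩ k (by dsimp only; omega) hLk (by omega)
        (ih (by omega) _ ?_ ?_)
      · intro i hi
        simp only [Finset.mem_symmDiff, Finset.mem_singleton] at hi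
        rcases hi with ⟨⟨hiJ, hik⟩ | ⟨rfl, hiJ⟩, -⟩ | ⟨rfl, -⟩
        · have := hJ i hiJ
          have : i.val ≠ k.val := Fin.val_ne_of_ne hik
          omega
        · exact absurd hkJ hiJ
        · dsimp only; omega
      · simpa [Finset.even_card_symmDiff_singleton] using heven
    · refine ih (by omega) J (fun i hi => ?_) heven
      have := hJ i hi
      have : i.val ≠ V := fun h => hV' ⟨i, hi, h⟩
      omega

def EqUpToSign {M : Type*} [AddCommMonoid M] [Module ℂ M] (x y : M) : Prop :=
  ∃ ε : ℂ, (ε = 1 ∨ ε = -1) ∧ x = ε • y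

namespace EqUpToSign

section Module

variable {M : Type*} [AddCommGroup M] [Module ℂ M] {x y z : M}

protected theorem refl (x : M) : EqUpToSign x x := ⟨1, .inl rfl, (one_smul ℂ x).symm⟩

theorem of_eq_neg (h : x = -y) : EqUpToSign x y := ⟨-1, .inr rfl, by rw [h, neg_one_smul]⟩

protected theorem symm (h : EqUpToSign x y) : EqUpToSign y x := by
  obtain ⟨ε, hε, rfl⟩ := h
  refine ⟨ε, hε, ?_⟩
  rcases hε with rfl | rfl <;> simp

protected theorem trans (h₁ : EqUpToSign x y) (h₂ : EqUpToSign y z) : EqUpToSign x z := by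
  obtain ⟨ε₁, hε₁, rfl⟩ := h₁
  obtain ⟨ε₂, hε₂, rfl⟩ := h₂
  refine ⟨ε₁ * ε₂, ?_, smul_smul ε₁ ε₂ z⟩
  rcases hε₁ with rfl | rfl <;> rcases hε₂ with rfl | rfl <;> simp

theorem map {N : Type*} [AddCommGroup N] [Module ℂ N] (h : EqUpToSign x y) (f : M →ₗ[ℂ] N) :
    EqUpToSign (f x) (f y) := by
  obtain ⟨ε, hε, rfl⟩ := h
  exact ⟨ε, hε, map_smul f ε y⟩

end Module

variable {A : Type*} [Ring A] [Algebra ℂ A] {x y : A}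

theorem mul_left (h : EqUpToSign x y) (a : A) : EqUpToSign (a * x) (a * y) := by
  obtain ⟨ε, hε, rfl⟩ := h
  exact ⟨ε, hε, mul_smul_comm ε a y⟩

theorem mul_right (h : EqUpToSign x y) (a : A) : EqUpToSign (x * a) (y * a) := by
  obtain ⟨ε, hε, rfl⟩ := h
  exact ⟨ε, hε, smul_mul_assoc ε y a⟩

end EqUpToSign

namespace DAHCA

section Cocenter

variable {A : Type*} [Ring A] [Algebra ℂ A]

theorem mkQ_commSpan_mul_comm (a b : A) :
    (commSpan A).mkQ (a * b) = (commSpan A).mkQ (b * a) := by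
  rw [← sub_eq_zero, ← map_sub, Submodule.mkQ_apply, Submodule.Quotient.mk_eq_zero]
  exact Submodule.subset_span ⟨a, b, rfl⟩

theorem mkQ_commSpan_conj_of_mul_self_eq_one {e : A} (he : e * e = 1) (z : A) :
    (commSpan A).mkQ (e * z * e) = (commSpan A).mkQ z := by
  rw [mkQ_commSpan_mul_comm, ← mul_assoc, he, one_mul]

theorem mul_mem_commSpan_of_mul_comm_eq_neg {a b : A} (h : b * a = (-1 : ℂ) • (a * b)) :
    a * b ∈ commSpan A := by
  have h2 : a * b - b * a = (2 : ℂ) • (a * b) := by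
    rw [h, neg_one_smul, sub_neg_eq_add, two_smul]
  have : a * b = (2⁻¹ : ℂ) • (a * b - b * a) := by
    rw [h2, smul_smul, inv_mul_cancel₀ two_ne_zero, one_smul]
  rw [this]
  exact Submodule.smul_mem _ _ (Submodule.subset_span ⟨a, b, rfl⟩)

theorem exists_sign_sub_smul_mem_commSpan {x y : A}
    (h : EqUpToSign ((commSpan A).mkQ x) ((commSpan A).mkQ y)) :
    ∃ ε : ℂ, (ε = 1 ∨ ε = -1) ∧ x - ε • y ∈ commSpan A := by
  obtain ⟨ε, hε, h⟩ := h
  refine ⟨ε, hε, ?_⟩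
  rwa [← map_smul, Submodule.mkQ_apply, Submodule.mkQ_apply, Submodule.Quotient.eq] at h

end Cocenter

section Relations

variable {n : ℕ} {u : ℂ}

theorem cH_mul_self (i : Fin n) : cH n u i * cH n u i = 1 := by
  rw [cH, ← map_mul, RingQuot.mkAlgHom_rel ℂ (Rel.csq i), map_one]

theorem cH_mul_cH_of_ne {i j : Fin n} (h : i ≠ j) :
    cH n u i * cH n u j = -(cH n u j * cH n u i) := by
  rw [cH, cH, ← map_mul, RingQuot.mkAlgHom_rel ℂ (Rel.cc i j h), map_neg, map_mul]

theorem wH_mul_wH (σ τ : Equiv.Perm (Fin n)) : wH n u σ * wH n u τ = wH n u (σ * τ) := by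
  rw [wH, wH, ← map_mul, RingQuot.mkAlgHom_rel ℂ (Rel.ww σ τ)]
  rfl

theorem wH_mul_cH (σ : Equiv.Perm (Fin n)) (i : Fin n) :
    wH n u σ * cH n u i = cH n u (σ i) * wH n u σ := by
  rw [wH, cH, ← map_mul, RingQuot.mkAlgHom_rel ℂ (Rel.wc σ i), map_mul]
  rfl

end Relations

section Clifford

variable {n : ℕ} {u : ℂ}

variable (n u) in
noncomputable def cList (l : List (Fin n)) : HA n u := (l.map (cH n u)).prod

@[simp] theorem cList_nil : cList n u [] = 1 := rfl

@[simp] theorem cList_cons (a : Fin n) (l : List (Fin n)) :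
    cList n u (a :: l) = cH n u a * cList n u l := by
  simp [cList]

theorem cList_append (l l' : List (Fin n)) :
    cList n u (l ++ l') = cList n u l * cList n u l' := by
  simp [cList]

theorem cProd_eq_cList (I : Finset (Fin n)) : cProd n u I = cList n u (I.sort (· ≤ ·)) := rfl

@[simp] theorem cProd_empty : cProd n u ∅ = 1 := by
  simp [cProd]

theorem cH_mul_cH_eqUpToSign (i j : Fin n) :
    EqUpToSign (cH n u i * cH n u j) (cH n u j * cH n u i) := by
  by_cases h : i = j
  · subst h
    exact .refl _
  · exact .of_eq_neg (cH_mul_cH_of_ne h)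

theorem cList_mul_cH_eqUpToSign (l : List (Fin n)) (k : Fin n) :
    EqUpToSign (cList n u l * cH n u k) (cH n u k * cList n u l) := by
  induction l with
  | nil => simpa using .refl _
  | cons a l ih =>
    simp only [cList_cons, mul_assoc]
    refine (ih.mul_left _).trans ?_
    simpa only [mul_assoc] using (cH_mul_cH_eqUpToSign a k).mul_right (cList n u l)

theorem cList_mul_cH_of_notMem {l : List (Fin n)} {k : Fin n} (hk : k ∉ l) :
    cList n u l * cH n u k = (-1 : ℂ) ^ l.length • (cH n u k * cList n u l) := by
  induction l with
  | nil => simp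
  | cons a l ih =>
    have hak : a ≠ k := fun h => hk (h ▸ List.mem_cons_self)
    rw [cList_cons, mul_assoc, ih (fun h => hk (List.mem_cons_of_mem a h)), mul_smul_comm,
      ← mul_assoc, cH_mul_cH_of_ne hak, ← neg_one_smul ℂ (cH n u k * cH n u a), smul_mul_assoc,
      smul_smul, ← pow_succ, mul_assoc, List.length_cons]

theorem cList_mul_cList_of_disjoint {l l' : List (Fin n)} (h : l.Disjoint l') :
    cList n u l' * cList n u l =
      (-1 : ℂ) ^ (l.length * l'.length) • (cList n u l * cList n u l') := by
  induction l with
  | nil => simp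
  | cons a l ih =>
    have ha : a ∉ l' := fun ha => h List.mem_cons_self ha
    rw [cList_cons, ← mul_assoc, cList_mul_cH_of_notMem ha, smul_mul_assoc, mul_assoc,
      ih (List.disjoint_of_disjoint_cons_left h), mul_smul_comm, smul_smul, ← pow_add,
      ← mul_assoc, List.length_cons, Nat.add_one_mul, add_comm]

theorem cProd_mul_cProd_of_disjoint {I J : Finset (Fin n)} (h : Disjoint I J) :
    cProd n u J * cProd n u I = (-1 : ℂ) ^ (I.card * J.card) • (cProd n u I * cProd n u J) := by
  have h := cList_mul_cList_of_disjoint (u := u) (l := I.sort (· ≤ ·)) (l' := J.sort (· ≤ ·))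
    fun i hI hJ => Finset.disjoint_left.mp h ((I.mem_sort _).mp hI) ((J.mem_sort _).mp hJ)
  rwa [Finset.length_sort, Finset.length_sort] at h

theorem cList_eqUpToSign_of_perm {l l' : List (Fin n)} (h : l.Perm l') (hl : l.Nodup) :
    EqUpToSign (cList n u l) (cList n u l') := by
  induction h with
  | nil => exact .refl _
  | cons x _ ih => simpa only [cList_cons] using (ih hl.of_cons).mul_left (cH n u x)
  | swap x y l =>
    have hxy : y ≠ x := fun h => (List.nodup_cons.mp hl).1 (h ▸ List.mem_cons_self)
    simpa only [cList_cons, ← mul_assoc] using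
      (EqUpToSign.of_eq_neg (cH_mul_cH_of_ne hxy)).mul_right (cList n u l)
  | trans h₁ _ ih₁ ih₂ => exact (ih₁ hl).trans (ih₂ (h₁.nodup_iff.mp hl))

theorem cList_eqUpToSign_cProd_toFinset {l : List (Fin n)} (hl : l.Nodup) :
    EqUpToSign (cList n u l) (cProd n u l.toFinset) := by
  refine cList_eqUpToSign_of_perm ?_ hl
  rw [← Multiset.coe_eq_coe, Finset.sort_eq, List.toFinset_val, hl.dedup]

theorem cProd_mul_cProd_eqUpToSign {I J : Finset (Fin n)} (h : Disjoint I J) :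
    EqUpToSign (cProd n u I * cProd n u J) (cProd n u (I ∪ J)) := by
  have hnd : (I.sort (· ≤ ·) ++ J.sort (· ≤ ·)).Nodup := List.nodup_append.mpr
    ⟨I.sort_nodup _, J.sort_nodup _, fun a ha b hb hab =>
      Finset.disjoint_left.mp h ((I.mem_sort _).mp ha) (hab ▸ (J.mem_sort _).mp hb)⟩
  simpa [cProd_eq_cList, cList_append] using cList_eqUpToSign_cProd_toFinset (u := u) hnd

theorem cH_mul_cProd_of_notMem {k : Fin n} {I : Finset (Fin n)} (hk : k ∉ I) :
    EqUpToSign (cH n u k * cProd n u I) (cProd n u (insert k I)) := by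
  have hnd : (k :: I.sort (· ≤ ·)).Nodup :=
    List.nodup_cons.mpr ⟨by simpa using hk, I.sort_nodup _⟩
  simpa [cProd_eq_cList] using cList_eqUpToSign_cProd_toFinset (u := u) hnd

theorem cH_mul_cProd (k : Fin n) (I : Finset (Fin n)) :
    EqUpToSign (cH n u k * cProd n u I) (cProd n u (I ∆ {k})) := by
  by_cases hk : k ∈ I
  · have h := cH_mul_cProd_of_notMem (u := u) (Finset.notMem_erase k I)
    rw [Finset.insert_erase hk] at h
    rw [Finset.symmDiff_singleton_of_mem hk]
    simpa [← mul_assoc, cH_mul_self] using (h.mul_left (cH n u k)).symm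
  · rw [Finset.symmDiff_singleton_of_notMem hk]
    exact cH_mul_cProd_of_notMem hk

theorem cProd_mul_cH (I : Finset (Fin n)) (k : Fin n) :
    EqUpToSign (cProd n u I * cH n u k) (cProd n u (I ∆ {k})) :=
  (cList_mul_cH_eqUpToSign _ k).trans (cH_mul_cProd k I)

theorem wH_commute_cProd {σ : Equiv.Perm (Fin n)} {I : Finset (Fin n)} (h : ∀ i ∈ I, σ i = i) :
    Commute (wH n u σ) (cProd n u I) := by
  refine Commute.list_prod_right _ _ ?_
  simp only [List.mem_map, Finset.mem_sort]
  rintro _ ⟨i, hi, rfl⟩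
  exact (wH_mul_cH σ i).trans (by rw [h i hi])

end Clifford

section Permutations

variable {n : ℕ}

theorem wSeg_apply_of_lt_or_le {a b : ℕ} {x : Fin n} (hx : x.val < a ∨ b ≤ x.val) :
    wSeg n a b x = x := by
  suffices wSeg n a b ∈ MulAction.stabilizer (Equiv.Perm (Fin n)) x from this
  refine Subgroup.list_prod_mem _ ?_
  simp only [List.mem_map, List.mem_range]
  rintro _ ⟨j, hj, rfl⟩
  split_ifs with h
  · rw [MulAction.mem_stabilizer_iff, Equiv.Perm.smul_def, sA]
    apply Equiv.swap_apply_of_ne_of_ne <;> rw [Ne, Fin.ext_iff] <;> simp only <;> omega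
  · exact one_mem _

theorem wSeg_add_two (a m : ℕ) :
    wSeg n a (a + m + 2) =
      wSeg n a (a + m + 1) * if h : a + m + 1 < n then sA n (a + m) h else 1 := by
  simp only [wSeg, show a + m + 2 - a - 1 = m + 1 by omega, show a + m + 1 - a - 1 = m by omega,
    List.range_succ, List.map_append, List.prod_append, List.map_singleton, List.prod_singleton]

theorem wSeg_apply_of_val_succ {a b : ℕ} {x y : Fin n} (hxy : x.val + 1 = y.val)
    (ha : a ≤ x.val) (hb : y.val < b) : wSeg n a b x = y := by
  obtain ⟨d, rfl⟩ := Nat.exists_eq_add_of_lt hb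
  induction d with
  | zero =>
    have h : a + (x.val - a) + 1 < n := by omega
    have hx : (⟨a + (x.val - a), by omega⟩ : Fin n) = x := Fin.ext (by simp only; omega)
    have hy : (⟨a + (x.val - a) + 1, h⟩ : Fin n) = y := Fin.ext (by simp only; omega)
    rw [show y.val + 0 + 1 = a + (x.val - a) + 2 by omega, wSeg_add_two, dif_pos h,
      Equiv.Perm.mul_apply, sA, hx, Equiv.swap_apply_left, hy]
    exact wSeg_apply_of_lt_or_le (.inr (by omega))
  | succ d ih =>
    have hfix : (if h : a + (y.val + d - a) + 1 < n then sA n _ h else 1) x = x := by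
      split_ifs
      · exact Equiv.swap_apply_of_ne_of_ne
          (Fin.ne_of_val_ne (by simp only; omega)) (Fin.ne_of_val_ne (by simp only; omega))
      · rfl
    rw [show y.val + (d + 1) + 1 = a + (y.val + d - a) + 2 by omega, wSeg_add_two,
      Equiv.Perm.mul_apply, hfix, show a + (y.val + d - a) + 1 = y.val + d + 1 by omega]
    exact ih (by omega)

theorem wSeg_commute_wSeg (a b c : ℕ) : Commute (wSeg n a b) (wSeg n b c) :=
  Equiv.Perm.Disjoint.commute fun x =>
    (le_or_gt b x.val).imp (fun h => wSeg_apply_of_lt_or_le (.inr h))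
      (fun h => wSeg_apply_of_lt_or_le (.inl h))

theorem wSeg_mul_wSeg_apply_of_val_succ {a b c : ℕ} {x y : Fin n} (hxy : x.val + 1 = y.val)
    (ha : a ≤ x.val) (hc : y.val < c) (hb : y.val ≠ b) : (wSeg n a b * wSeg n b c) x = y := by
  rw [Equiv.Perm.mul_apply]
  rcases lt_or_gt_of_ne hb with h | h
  · rw [wSeg_apply_of_lt_or_le (a := b) (b := c) (.inl (by omega)),
      wSeg_apply_of_val_succ hxy ha h]
  · rw [wSeg_apply_of_val_succ hxy (by omega) hc, wSeg_apply_of_lt_or_le (.inr h.le)]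

end Permutations

section TwoBlocks

variable {n : ℕ} {u : ℂ}

theorem mkQ_wH_mul_cProd_eqUpToSign_symmDiff (σ : Equiv.Perm (Fin n)) {k' k : Fin n}
    (h : σ k' = k) (J : Finset (Fin n)) :
    EqUpToSign ((commSpan (HA n u)).mkQ (wH n u σ * cProd n u J))
      ((commSpan (HA n u)).mkQ (wH n u σ * cProd n u (J ∆ {k} ∆ {k'}))) := by
  rw [← mkQ_commSpan_conj_of_mul_self_eq_one (cH_mul_self k) (wH n u σ * cProd n u J)]
  have hconj : cH n u k * (wH n u σ * cProd n u J) * cH n u k =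
      wH n u σ * (cH n u k' * (cProd n u J * cH n u k)) := by
    rw [← mul_assoc, ← h, ← wH_mul_cH]
    simp only [mul_assoc]
  rw [hconj]
  exact ((((cProd_mul_cH J k).mul_left (cH n u k')).trans (cH_mul_cProd k' _)).mul_left _).map _

theorem mkQ_wH_mul_cProd_union_eqUpToSign {σ : Equiv.Perm (Fin n)} {L U : ℕ}
    (hσ : ∀ k' k : Fin n, k'.val + 1 = k.val → L < k.val → k.val < U → σ k' = k)
    {J K : Finset (Fin n)} (hJ : ∀ i ∈ J, L ≤ i.val ∧ i.val < U) (heven : Even J.card)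
    (hK : ∀ i ∈ K, i.val < L ∨ U ≤ i.val) :
    EqUpToSign ((commSpan (HA n u)).mkQ (wH n u σ * cProd n u (J ∪ K)))
      ((commSpan (HA n u)).mkQ (wH n u σ * cProd n u K)) := by
  refine Finset.induction_on_even_card_of_adjacent
    (P := fun J => EqUpToSign ((commSpan (HA n u)).mkQ (wH n u σ * cProd n u (J ∪ K)))
      ((commSpan (HA n u)).mkQ (wH n u σ * cProd n u K)))
    (by simpa using .refl _) (fun J k' k hkk hL hU ih => ?_) hJ heven
  have hKk : ∀ i : Fin n, L ≤ i.val → i.val < U → Disjoint K {i} := fun i hLi hiU =>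
    Finset.disjoint_singleton_right.mpr fun hi => by have := hK i hi; omega
  rw [← Finset.union_symmDiff_of_disjoint (hKk k' (by omega) (by omega)),
    ← Finset.union_symmDiff_of_disjoint (hKk k (by omega) hU)] at ih
  exact (mkQ_wH_mul_cProd_eqUpToSign_symmDiff σ (hσ k' k hkk hL hU) _).trans ih

theorem wH_mul_mul_cProd_mul_cProd_mem_commSpan {σ τ : Equiv.Perm (Fin n)} (hστ : Commute σ τ)
    {I J : Finset (Fin n)} (hτ : ∀ i ∈ I, τ i = i) (hσ : ∀ j ∈ J, σ j = j) (hIJ : Disjoint I J)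
    (hodd : Odd (I.card * J.card)) :
    wH n u (σ * τ) * cProd n u I * cProd n u J ∈ commSpan (HA n u) := by
  have hAB : wH n u σ * cProd n u I * (wH n u τ * cProd n u J) =
      wH n u (σ * τ) * cProd n u I * cProd n u J := by
    rw [← wH_mul_wH]
    simp only [mul_assoc]
    rw [← mul_assoc (cProd n u I), ← (wH_commute_cProd hτ).eq, mul_assoc]
  rw [← hAB]
  refine mul_mem_commSpan_of_mul_comm_eq_neg ?_
  rw [hAB, hστ.eq, ← wH_mul_wH]
  simp only [mul_assoc]
  rw [← mul_assoc (cProd n u J), ← (wH_commute_cProd hσ).eq, mul_assoc,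
    cProd_mul_cProd_of_disjoint hIJ, hodd.neg_one_pow, mul_smul_comm, mul_smul_comm]

end TwoBlocks

theorem wGamma_two_blocks_reduction_general (n : ℕ) (u : ℂ) (γ1 : ℕ) (I1 I2 : Finset (Fin n))
    (hI1 : ∀ i ∈ I1, (i : ℕ) < γ1) (hI2 : ∀ i ∈ I2, γ1 ≤ (i : ℕ)) :
    (Odd I1.card → Odd I2.card →
      wH n u (wSeg n 0 γ1 * wSeg n γ1 n) * cProd n u I1 * cProd n u I2 ∈
        commSpan (HA n u)) ∧
    (Even I1.card → Even I2.card →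
      ∃ ε : ℂ, (ε = 1 ∨ ε = -1) ∧
        wH n u (wSeg n 0 γ1 * wSeg n γ1 n) * cProd n u I1 * cProd n u I2 -
          ε • wH n u (wSeg n 0 γ1 * wSeg n γ1 n) ∈ commSpan (HA n u)) := by
  have hdisj : Disjoint I1 I2 :=
    Finset.disjoint_left.mpr fun i h₁ h₂ => (hI2 i h₂).not_gt (hI1 i h₁)
  refine ⟨fun ho1 ho2 => ?_, fun he1 he2 => ?_⟩
  · exact wH_mul_mul_cProd_mul_cProd_mem_commSpan (wSeg_commute_wSeg 0 γ1 n)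
      (fun i hi => wSeg_apply_of_lt_or_le (.inl (hI1 i hi)))
      (fun i hi => wSeg_apply_of_lt_or_le (.inr (hI2 i hi))) hdisj (ho1.mul ho2)
  · apply exists_sign_sub_smul_mem_commSpan
    rw [mul_assoc]
    refine (((cProd_mul_cProd_eqUpToSign hdisj).mul_left _).map _).trans ?_
    refine (mkQ_wH_mul_cProd_union_eqUpToSign
      (fun k' k hkk _ hk => wSeg_mul_wSeg_apply_of_val_succ hkk (Nat.zero_le _) (by omega) hk.ne)
      (fun i hi => ⟨Nat.zero_le _, hI1 i hi⟩) he1 (fun i hi => .inr (hI2 i hi))).trans ?_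
    simpa using mkQ_wH_mul_cProd_union_eqUpToSign (K := ∅)
      (fun k' k hkk hk _ => wSeg_mul_wSeg_apply_of_val_succ hkk (by omega) k.isLt hk.ne')
      (fun i hi => ⟨hI2 i hi, i.isLt⟩) he2 (by simp)

/-- Let `γ = (γ_1, γ_2)` be a composition of `n` and
`w_γ = w_{γ_1} w_{γ_2}`.  If `I_1 ⊆ B_1` and `I_2 ⊆ B_2` with `|I_1| + |I_2|` even, then
`w_γ c_{I_1} c_{I_2}` is a commutator-combination if `|I_1|, |I_2|` are odd, and is
congruent to `± w_γ` modulo commutators if `|I_1|, |I_2|` are even. -/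
theorem wGamma_two_blocks_reduction (n : ℕ) (hn : 2 ≤ n) (u : ℂ)
    (γ1 γ2 : ℕ) (h1 : 0 < γ1) (h2 : 0 < γ2) (hsum : γ1 + γ2 = n)
    (I1 I2 : Finset (Fin n))
    (hI1 : ∀ i ∈ I1, (i : ℕ) < γ1) (hI2 : ∀ i ∈ I2, γ1 ≤ (i : ℕ))
    (hab : Even (I1.card + I2.card)) :
    (Odd I1.card → Odd I2.card →
      wH n u (wSeg n 0 γ1 * wSeg n γ1 n) * cProd n u I1 * cProd n u I2 ∈
        commSpan (HA n u)) ∧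
    (Even I1.card → Even I2.card →
      ∃ ε : ℂ, (ε = 1 ∨ ε = -1) ∧
        wH n u (wSeg n 0 γ1 * wSeg n γ1 n) * cProd n u I1 * cProd n u I2 -
          ε • wH n u (wSeg n 0 γ1 * wSeg n γ1 n) ∈ commSpan (HA n u)) :=
  wGamma_two_blocks_reduction_general n u γ1 I1 I2 hI1 hI2

end DAHCA
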